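/- arXiv:2510.24088 — 3 statements merged into one kernel-verified Lean document; each statement's English description precedes it below -/
import Mathlib

section
/- The function p(I) = B(L-|I|, |I|+1)/H_L, defined on proper subsets I of {1,...,L}, is a probability mass function: it is nonnegative and its values sum to 1. -/
open Finset

/-!
Group the proper subsets `I` by `k = |I| < L`: the `choose L k` subsets of size `k` each carry
`k! (L-k-1)! / L! = 1 / (choose L k * (L - k))`, so size `k` contributes `1 / (L - k)` in total,
and summing over `k < L` gives `H_L` (read backwards).
-/

open scoped Nat

theorem Finset.sum_filter_ne_univ_apply_card {α M : Type*} [Fintype α] [DecidableEq α]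
    [AddCommMonoid M] [IsRightCancelAdd M] (f : ℕ → M) :
    ∑ I ∈ univ.filter (fun I : Finset α => I ≠ univ), f #I
      = ∑ k ∈ range (Fintype.card α), (Fintype.card α).choose k • f k := by
  have hsplit := sum_filter_add_sum_filter_not univ (fun I : Finset α => I ≠ univ) (f #·)
  have hfull : univ.filter (fun I : Finset α => ¬I ≠ univ) = {univ} := by
    ext I; simp
  rw [hfull, sum_singleton, ← powerset_univ, sum_powerset_apply_card, card_univ,
    sum_range_succ, Nat.choose_self, one_smul] at hsplit
  exact add_right_cancel hsplit

theorem Nat.cast_choose_mul_factorial_mul_factorial_pred_div {K : Type*} [Field K] [CharZero K]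
    {n k : ℕ} (hk : k < n) :
    (n.choose k : K) * ((k ! : K) * ((n - k - 1)! : K) / (n ! : K)) = 1 / ((n : K) - k) := by
  have hsucc : n - k = (n - k - 1) + 1 := by omega
  have hnk : ((n - k : ℕ) : K) = (n : K) - k := Nat.cast_sub hk.le
  have hfact (m : ℕ) : (m ! : K) ≠ 0 := Nat.cast_ne_zero.mpr m.factorial_ne_zero
  rw [Nat.cast_choose K hk.le, hsucc, Nat.factorial_succ, Nat.cast_mul, ← hsucc, hnk]
  field_simp [hfact]

theorem sum_range_one_div_sub_eq_sum_range_one_div_succ {K : Type*} [Field K] (n : ℕ) :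
    ∑ k ∈ range n, 1 / ((n : K) - k) = ∑ j ∈ range n, 1 / ((j : K) + 1) := by
  rw [← sum_range_reflect]
  refine sum_congr rfl fun k hk => ?_
  obtain ⟨m, rfl⟩ : ∃ m, n = m + k + 1 := ⟨n - k - 1, by have := mem_range.mp hk; omega⟩
  rw [show m + k + 1 - 1 - k = m by omega]
  push_cast
  ring

/-- The function `p(I) = B(L-|I|, |I|+1) / H_L`, defined on proper subsets `I` of
`{1,...,L}`, is a probability mass function: nonnegative and summing to `1`. -/
theorem beta_over_harmonic_is_pmf (L : ℕ) (hL : 0 < L) :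
    (∀ I : Finset (Fin L), I ≠ Finset.univ →
      0 ≤ (((I.card.factorial : ℝ) * ((L - I.card - 1).factorial : ℝ)) / (L.factorial : ℝ))
            / (∑ j ∈ Finset.range L, 1 / ((j : ℝ) + 1))) ∧
    ∑ I ∈ Finset.univ.filter (fun I : Finset (Fin L) => I ≠ Finset.univ),
        (((I.card.factorial : ℝ) * ((L - I.card - 1).factorial : ℝ)) / (L.factorial : ℝ))
          / (∑ j ∈ Finset.range L, 1 / ((j : ℝ) + 1))
      = 1 := by
  have harmonic_pos : 0 < ∑ j ∈ range L, 1 / ((j : ℝ) + 1) :=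
    sum_pos (fun j _ => by positivity) (nonempty_range_iff.mpr hL.ne')
  refine ⟨fun I _ => by positivity, ?_⟩
  rw [← sum_div, div_eq_one_iff_eq harmonic_pos.ne',
    sum_filter_ne_univ_apply_card (fun k => (k ! : ℝ) * ((L - k - 1)! : ℝ) / (L ! : ℝ)),
    Fintype.card_fin, ← sum_range_one_div_sub_eq_sum_range_one_div_succ]
  refine sum_congr rfl fun k hk => ?_
  rw [nsmul_eq_mul, Nat.cast_choose_mul_factorial_mul_factorial_pred_div (mem_range.mp hk)]
end

section
/- Time-free likelihood identity: for a probability distribution p_0 on X^L with p_0(x_0) > 0 and full support on all marginal conditionals involved, -log p_0(x_0) = ∑_{I ⊊ {1,...,L}} B(L-|I|, |I|+1) · ∑_{i ∉ I} log(1 / p_0(x_0^i | x_0^I)), where x_0^I denotes the subsequence of x_0 indexed by I and p_0(x_0^i | x_0^I) is the conditional probability of token x_0^i at position i given the tokens at positions in I. -/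
/-!
With `f I = log p₀(x₀^I)`, each inner sum is `∑_{i ∉ I} (f I - f (I ∪ {i}))`, so the right-hand side
is the sum over all players of the Shapley values of the game `f`, which by efficiency is
`f ∅ - f univ = log 1 - log p₀(x₀)`. Efficiency is a double count: pairs `(I, i ∉ I)` correspond to
pairs `(J, i ∈ J)` via `J = I ∪ {i}`, and the two coefficients `f J` collects, `(n - |J|) B(n - |J|, |J| + 1)`
and `|J| B(n - |J| + 1, |J|)`, are both `1 / (n choose |J|)`, except at `J = ∅` and `J = univ`.
-/

open Finset

/-- Marginal probability that the coordinates in `J` take the values specified by `x`,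
under a distribution `p0` on `X^L`. -/
noncomputable def marg {X : Type*} [Fintype X] [DecidableEq X] {L : ℕ}
    (p0 : (Fin L → X) → ℝ) (J : Finset (Fin L)) (x : Fin L → X) : ℝ :=
  ∑ y : Fin L → X, if ∀ i ∈ J, y i = x i then p0 y else 0

open scoped Nat

/-- `B(n - k, k + 1)`, the Shapley weight of a coalition of size `k` in an `n`-player game. -/
noncomputable def shapleyWeight (n k : ℕ) : ℝ := ((k ! : ℝ) * ((n - k - 1)! : ℝ)) / (n ! : ℝ)

theorem cast_sub_mul_shapleyWeight {n k : ℕ} (hk : k < n) :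
    ((n - k : ℕ) : ℝ) * shapleyWeight n k = k ! * (n - k)! / n ! := by
  rw [shapleyWeight, ← Nat.mul_factorial_pred (Nat.sub_ne_zero_of_lt hk)]
  push_cast
  ring

theorem cast_mul_shapleyWeight_pred {n k : ℕ} (hk : 0 < k) (hkn : k ≤ n) :
    (k : ℝ) * shapleyWeight n (k - 1) = k ! * (n - k)! / n ! := by
  rw [shapleyWeight, ← Nat.mul_factorial_pred hk.ne', show n - (k - 1) - 1 = n - k by omega]
  push_cast
  ring

theorem cast_sub_mul_shapleyWeight_sub_mul_shapleyWeight_pred {n k : ℕ} (hk : k ≤ n) :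
    ((n - k : ℕ) : ℝ) * shapleyWeight n k - k * shapleyWeight n (k - 1)
      = (if k = 0 then 1 else 0) - (if k = n then 1 else 0) := by
  have hn : (n ! : ℝ) ≠ 0 := by positivity
  rcases Nat.eq_zero_or_pos k with rfl | hk0
  · rcases Nat.eq_zero_or_pos n with rfl | hn0
    · simp
    · rw [cast_sub_mul_shapleyWeight hn0]
      simp [hn0.ne, Nat.factorial_ne_zero]
  · rcases hk.lt_or_eq with hkn | rfl
    · rw [cast_sub_mul_shapleyWeight hkn, cast_mul_shapleyWeight_pred hk0 hk]
      simp [hk0.ne', hkn.ne]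
    · rw [cast_mul_shapleyWeight_pred hk0 le_rfl]
      simp [hk0.ne', hn]

theorem Finset.sum_sum_compl_insert {α M : Type*} [Fintype α] [DecidableEq α] [AddCommMonoid M]
    (g : Finset α → α → M) :
    ∑ I, ∑ i ∈ Iᶜ, g (insert i I) i = ∑ J, ∑ i ∈ J, g J i := by
  rw [sum_sigma', sum_sigma']
  refine sum_nbij' (fun p => ⟨insert p.2 p.1, p.2⟩) (fun p => ⟨p.1.erase p.2, p.2⟩)
    ?_ ?_ ?_ ?_ fun _ _ => rfl
  · simp
  · simp
  · rintro ⟨I, i⟩ h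
    simp_all
  · rintro ⟨J, i⟩ h
    simp_all

theorem sum_shapleyWeight_mul_sum_compl_sub {α : Type*} [Fintype α] [DecidableEq α]
    (f : Finset α → ℝ) :
    ∑ I, shapleyWeight (Fintype.card α) I.card * ∑ i ∈ Iᶜ, (f I - f (insert i I))
      = f ∅ - f univ := by
  set n := Fintype.card α
  calc _ = ∑ I, ((n - I.card : ℕ) : ℝ) * shapleyWeight n I.card * f I
        - ∑ I, ∑ i ∈ Iᶜ, shapleyWeight n ((insert i I).card - 1) * f (insert i I) := by
        simp only [mul_sum, mul_sub, sum_sub_distrib, sum_const, card_compl]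
        congr 1
        · exact sum_congr rfl fun I _ => by rw [nsmul_eq_mul]; ring
        · refine sum_congr rfl fun I _ => sum_congr rfl fun i hi => ?_
          rw [card_insert_of_notMem (mem_compl.1 hi), Nat.add_sub_cancel]
    _ = ∑ I, (((n - I.card : ℕ) : ℝ) * shapleyWeight n I.card
          - I.card * shapleyWeight n (I.card - 1)) * f I := by
        rw [sum_sum_compl_insert (fun J _ => shapleyWeight n (J.card - 1) * f J)]
        simp only [sum_const, nsmul_eq_mul, sub_mul, sum_sub_distrib, mul_assoc]
    _ = ∑ I, ((if I = ∅ then f I else 0) - (if I = univ then f I else 0)) := by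
        refine sum_congr rfl fun I _ => ?_
        rw [cast_sub_mul_shapleyWeight_sub_mul_shapleyWeight_pred (card_le_univ I)]
        simp only [Finset.card_eq_zero, card_eq_iff_eq_univ, sub_mul, ite_mul, one_mul, zero_mul]
    _ = f ∅ - f univ := by simp [sum_sub_distrib]

section Marginal

variable {X : Type*} [Fintype X] [DecidableEq X] {L : ℕ} (p0 : (Fin L → X) → ℝ) (x : Fin L → X)

theorem marg_empty : marg p0 ∅ x = ∑ y, p0 y := by
  simp [marg]

theorem marg_univ : marg p0 univ x = p0 x := by
  simp [marg, ← funext_iff]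

end Marginal

theorem time_free_likelihood_general
    {X : Type*} [Fintype X] [DecidableEq X] {L : ℕ}
    (p0 : (Fin L → X) → ℝ) (x0 : Fin L → X)
    (hp1 : ∑ y : Fin L → X, p0 y = 1)
    (hmarg : ∀ J : Finset (Fin L), 0 < marg p0 J x0) :
    -Real.log (p0 x0)
      = ∑ I ∈ Finset.univ.filter (fun I : Finset (Fin L) => I ≠ Finset.univ),
          ((I.card.factorial : ℝ) * ((L - I.card - 1).factorial : ℝ)) / (L.factorial : ℝ)
            * ∑ i ∈ Iᶜ, Real.log (1 / (marg p0 (insert i I) x0 / marg p0 I x0)) := by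
  set f : Finset (Fin L) → ℝ := fun I => Real.log (marg p0 I x0)
  have hlog (I : Finset (Fin L)) (i : Fin L) :
      Real.log (1 / (marg p0 (insert i I) x0 / marg p0 I x0)) = f I - f (insert i I) := by
    rw [one_div_div, Real.log_div (hmarg I).ne' (hmarg _).ne']
  have hdrop_univ : ∀ I ∈ (univ : Finset (Finset (Fin L))),
      shapleyWeight L I.card * ∑ i ∈ Iᶜ, (f I - f (insert i I)) ≠ 0 → I ≠ univ := by
    rintro I - hI rfl
    simp at hI
  have hshapley := sum_shapleyWeight_mul_sum_compl_sub f
  rw [Fintype.card_fin] at hshapley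
  simp only [hlog, ← shapleyWeight.eq_1]
  rw [sum_filter_of_ne hdrop_univ]
  calc -Real.log (p0 x0) = f ∅ - f univ := by simp [f, marg_empty, marg_univ, hp1]
    _ = _ := hshapley.symm

/-- Time-free likelihood identity: for a probability distribution `p0` on `X^L` with
`p0 x0 > 0` and positive marginals,
`-log p0(x0) = ∑_{I ⊊ {1,...,L}} B(L-|I|, |I|+1) ∑_{i ∉ I} log (1 / p0(x0^i | x0^I))`,
where `B(a,b) = (a-1)!(b-1)!/(a+b-1)!` and
`p0(x0^i | x0^I) = marg p0 (insert i I) x0 / marg p0 I x0`. -/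
theorem time_free_likelihood
    {X : Type*} [Fintype X] [DecidableEq X] {L : ℕ} (hL : 0 < L)
    (p0 : (Fin L → X) → ℝ) (x0 : Fin L → X)
    (hp0 : ∀ y, 0 ≤ p0 y) (hp1 : ∑ y : Fin L → X, p0 y = 1)
    (hx0 : 0 < p0 x0)
    (hmarg : ∀ J : Finset (Fin L), 0 < marg p0 J x0) :
    -Real.log (p0 x0)
      = ∑ I ∈ Finset.univ.filter (fun I : Finset (Fin L) => I ≠ Finset.univ),
          ((I.card.factorial : ℝ) * ((L - I.card - 1).factorial : ℝ)) / (L.factorial : ℝ)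
            * ∑ i ∈ Iᶜ, Real.log (1 / (marg p0 (insert i I) x0 / marg p0 I x0)) :=
  time_free_likelihood_general p0 x0 hp1 hmarg
end

section
/- Pointwise DSE–DCE equivalence (single masked token, scalar form): fix λ ∈ (0,1), a true token value a ∈ X, and a predicted distribution c on X with c(a) > 0. Define the score s(v) = ((1-λ)/λ) c(v) for each v ∈ X and the true ratio r(v) = ((1-λ)/λ) 1[v = a]. Then ∑_{v ∈ X} ( s(v) - r(v) log s(v) + K(r(v)) ) = ((1-λ)/λ) log(1/c(a)), where K(u) = u(log u - 1) for u > 0 and K(0) = 0, provided c sums to 1 over X. -/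
open Finset Real

/-- `K u = u * (log u - 1)` for `u > 0` with `K 0 = 0`. -/
noncomputable def K (u : ℝ) : ℝ := u * (Real.log u - 1)

/-- Pointwise DSE–DCE equivalence (single masked token, scalar form): for `lam ∈ (0,1)`,
a true token `a`, and a predicted distribution `c` summing to `1` with `c a > 0`, setting
`s v = ((1-lam)/lam) * c v` and `r v = ((1-lam)/lam) * 1[v = a]`,
`∑ v, (s v − r v * log (s v) + K (r v)) = ((1-lam)/lam) * log (1 / c a)`. -/
theorem dse_dce_pointwise_equiv
    {X : Type*} [Fintype X] [DecidableEq X]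
    (lam : ℝ) (hlam : lam ∈ Set.Ioo (0:ℝ) 1)
    (a : X) (c : X → ℝ) (hca : 0 < c a) (hc1 : ∑ v, c v = 1) :
    ∑ v : X,
        (((1 - lam) / lam) * c v
          - ((1 - lam) / lam) * (if v = a then (1:ℝ) else 0)
              * Real.log (((1 - lam) / lam) * c v)
          + K (((1 - lam) / lam) * (if v = a then (1:ℝ) else 0)))
      = ((1 - lam) / lam) * Real.log (1 / c a) := by
  obtain ⟨h0, h1⟩ := hlam
  set ρ : ℝ := (1 - lam) / lam with hρdef
  have hρ : 0 < ρ := div_pos (by linarith) h0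
  have hsum : ∀ v : X,
      (ρ * c v - ρ * (if v = a then (1:ℝ) else 0) * Real.log (ρ * c v)
        + K (ρ * (if v = a then (1:ℝ) else 0)))
      = ρ * c v + (if v = a then -(ρ * Real.log (ρ * c a)) + K ρ else 0) := by
    intro v
    by_cases h : v = a <;> simp [h, K]
    ring
  simp only [hsum, Finset.sum_add_distrib, ← Finset.mul_sum, hc1,
    Finset.sum_ite_eq' Finset.univ a, Finset.mem_univ, if_true]
  have hlog : Real.log (ρ * c a) = Real.log ρ + Real.log (c a) :=
    Real.log_mul (ne_of_gt hρ) (ne_of_gt hca)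
  rw [Real.log_div one_ne_zero (ne_of_gt hca), hlog]
  simp [K]
  ring
end
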